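/- For an integer k ≥ 1, let y_m = 1 / (1 + (1 − 2/(2k+1))^{2m−2}), μ_m = 1/2 − 1/(4k) + y_m/(2k) for 1 ≤ m ≤ k, β₁ = 1, β_{m+1} = β_m · μ_m/(1 − μ_{m+1}), and α_m = β_m / Σ_{i=1}^k β_i. Then α₁(1 − μ₁) + α_k μ_k ≤ 4/(3k), and hence (1/4)·(1 − α₁(1 − μ₁) − α_k μ_k) ≥ 1/4 − 1/(3k). -/

import Mathlib

noncomputable section

/-- `y_m = 1 / (1 + (1 - 2/(2k+1))^(2m-2))`. -/
def yk (k m : ℕ) : ℝ := 1 / (1 + (1 - 2/(2*(k:ℝ) + 1)) ^ (2*m - 2))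

/-- `μ_m = 1/2 - 1/(4k) + y_m/(2k)`. -/
def muk (k m : ℕ) : ℝ := 1/2 - 1/(4*(k:ℝ)) + yk k m / (2*(k:ℝ))

/-- `β₁ = 1` and `β_{m+1} = β_m · μ_m/(1 - μ_{m+1})`. -/
def betak (k : ℕ) : ℕ → ℝ
  | 0 => 1
  | 1 => 1
  | (m + 2) => betak k (m + 1) * muk k (m + 1) / (1 - muk k (m + 2))

/-- The normalized mixing probability `α_m = β_m / ∑_{i=1}^k β_i`. -/
def alphak (k m : ℕ) : ℝ := betak k m / ∑ i ∈ Finset.Icc 1 k, betak k i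

/-! With `ρ = 1 - 2/(2k+1) = (2k-1)/(2k+1)` one has `μ_{n+1} = (1 + ρ^(2n+1)) / ((1+ρ)(1+ρ^(2n)))`,
and the recursion for `β` then solves to `β_{n+1} = (ρ^(-n) + ρ^n)/2`. The normalizing sum is
therefore geometric, and since `(1-ρ)/(1+ρ) = 1/(2k)` the mass `α₁(1-μ₁) + α_k μ_k` collapses to
`(1 + ρ^k) / (2k (1 - ρ^k))`. This is at most `4/(3k)` exactly when `ρ^k ≤ 5/11`, which follows
from the binomial expansion of `ρ^(-k) = (1 + 2/(2k-1))^k` up to its quadratic term. -/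

lemma one_add_mul_add_choose_two_mul_sq_le_pow {x : ℝ} (hx : 0 ≤ x) (n : ℕ) :
    1 + n * x + n.choose 2 * x ^ 2 ≤ (1 + x) ^ n := by
  induction n with
  | zero => simp
  | succ n ih =>
    rw [pow_succ (1 + x), Nat.choose_succ_succ', Nat.choose_one_right]
    push_cast
    have : (0:ℝ) ≤ n.choose 2 * x ^ 3 := by positivity
    nlinarith [mul_le_mul_of_nonneg_right ih (by linarith : 0 ≤ 1 + x)]

lemma sum_range_one_add_pow_two_mul_div {r : ℝ} (hr : 0 < r) (hr1 : r ≠ 1) (n : ℕ) :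
    ∑ j ∈ Finset.range n, (1 + r ^ (2 * j)) / (2 * r ^ j)
      = (1 - r ^ n) * (r + r ^ n) / (2 * r ^ n * (1 - r)) := by
  have : 1 - r ≠ 0 := sub_ne_zero.2 hr1.symm
  induction n with
  | zero => simp
  | succ n ih =>
    rw [Finset.sum_range_succ, ih]
    have := pow_pos hr n
    field_simp
    ring

def rhok (k : ℕ) : ℝ := 1 - 2 / (2 * (k:ℝ) + 1)

section

variable {k : ℕ}

lemma rhok_pos (hk : 1 ≤ k) : 0 < rhok k := by
  have hK : (1:ℝ) ≤ k := by exact_mod_cast hk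
  rw [rhok, sub_pos, div_lt_one (by positivity)]
  linarith

lemma rhok_lt_one : rhok k < 1 := by
  rw [rhok, sub_lt_self_iff]
  positivity

lemma one_div_two_mul_eq_one_sub_rhok_div (hk : 1 ≤ k) : 1 / (2 * (k:ℝ)) = (1 - rhok k) / (1 + rhok k) := by
  have hK : (k:ℝ) ≠ 0 := Nat.cast_ne_zero.2 (by omega)
  have h1 : 1 - rhok k = 2 / (2 * k + 1) := by rw [rhok]; ring
  have h2 : 1 + rhok k = 4 * k / (2 * k + 1) := by rw [rhok]; field_simp; ring
  rw [h1, h2]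
  field_simp
  ring

lemma muk_succ (hk : 1 ≤ k) (n : ℕ) :
    muk k (n + 1) = (1 + rhok k ^ (2 * n + 1)) / ((1 + rhok k) * (1 + rhok k ^ (2 * n))) := by
  have hρ := rhok_pos hk
  have hK : (0:ℝ) < k := by exact_mod_cast hk
  have h2k : 1 / (4 * (k:ℝ)) = 1 / 2 * (1 / (2 * k)) := by field_simp; ring
  rw [muk, yk, h2k, div_eq_mul_one_div (_ / _), one_div_two_mul_eq_one_sub_rhok_div hk, ← rhok,
    show 2 * (n + 1) - 2 = 2 * n by omega]
  have := pow_pos hρ (2 * n)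
  field_simp
  ring

lemma one_sub_muk_succ (hk : 1 ≤ k) (n : ℕ) :
    1 - muk k (n + 1) = (rhok k + rhok k ^ (2 * n)) / ((1 + rhok k) * (1 + rhok k ^ (2 * n))) := by
  have hρ := rhok_pos hk
  have := pow_pos hρ (2 * n)
  rw [muk_succ hk]
  field_simp
  ring

lemma betak_succ (hk : 1 ≤ k) (n : ℕ) :
    betak k (n + 1) = (1 + rhok k ^ (2 * n)) / (2 * rhok k ^ n) := by
  have hρ := rhok_pos hk
  induction n with
  | zero => simp [betak]
  | succ n ih =>
    rw [betak, ih, muk_succ hk, one_sub_muk_succ hk]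
    have := pow_pos hρ n
    field_simp
    ring

lemma betak_mul_muk_succ (hk : 1 ≤ k) (n : ℕ) :
    betak k (n + 1) * muk k (n + 1)
      = (1 + rhok k ^ (2 * n + 1)) / (2 * rhok k ^ n * (1 + rhok k)) := by
  have hρ := rhok_pos hk
  have := pow_pos hρ (2 * n)
  rw [betak_succ hk, muk_succ hk]
  field_simp

lemma muk_one (hk : 1 ≤ k) : muk k 1 = 1 / 2 := by
  have hρ := rhok_pos hk
  rw [muk_succ hk 0]
  field_simp
  ring

lemma sum_betak (hk : 1 ≤ k) :
    ∑ i ∈ Finset.Icc 1 k, betak k i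
      = (1 - rhok k ^ k) * (rhok k + rhok k ^ k) / (2 * rhok k ^ k * (1 - rhok k)) := by
  rw [← Finset.Ico_add_one_right_eq_Icc, Finset.sum_Ico_eq_sum_range, Nat.add_sub_cancel]
  simp_rw [add_comm 1, betak_succ hk]
  exact sum_range_one_add_pow_two_mul_div (rhok_pos hk) rhok_lt_one.ne k

lemma alphak_one_mul_add_alphak_mul_muk_eq (hk : 1 ≤ k) :
    alphak k 1 * (1 - muk k 1) + alphak k k * muk k k
      = 1 / (2 * k) * ((1 + rhok k ^ k) / (1 - rhok k ^ k)) := by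
  obtain ⟨n, rfl⟩ : ∃ n, k = n + 1 := ⟨k - 1, by omega⟩
  have hρ := rhok_pos hk
  have hρ1 : rhok (n + 1) < 1 := rhok_lt_one
  have hu : rhok (n + 1) ^ (n + 1) < 1 := pow_lt_one₀ hρ.le hρ1 (by omega)
  have := pow_pos hρ n
  rw [alphak, alphak, div_mul_eq_mul_div, div_mul_eq_mul_div, ← add_div, sum_betak hk,
    betak_mul_muk_succ hk, muk_one hk, show betak (n + 1) 1 = 1 from rfl, one_div_two_mul_eq_one_sub_rhok_div hk]
  have : 1 - rhok (n + 1) ≠ 0 := by linarith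
  have : 1 - rhok (n + 1) ^ (n + 1) ≠ 0 := by linarith
  field_simp
  ring

lemma rhok_pow_le (hk : 1 ≤ k) : rhok k ^ k ≤ 5 / 11 := by
  set d : ℝ := 2 * k - 1 with hd_def
  have hd : 1 ≤ d := by
    have : (1:ℝ) ≤ k := by exact_mod_cast hk
    linarith
  have hkd : (k:ℝ) = (d + 1) / 2 := by rw [hd_def]; ring
  have hρ : rhok k = (1 + 2 / d)⁻¹ := by
    have : d + 2 ≠ 0 := by linarith
    rw [rhok, hkd]; field_simp; ring
  have hbinom := one_add_mul_add_choose_two_mul_sq_le_pow (x := 2 / d) (by positivity) k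
  have hexpand : 1 + k * (2 / d) + k.choose 2 * (2 / d) ^ 2
      = 11 / 5 + (3 * d ^ 2 + 10 * d - 5) / (10 * d ^ 2) := by
    rw [Nat.cast_choose_two, hkd]; field_simp; ring
  have hrem : 0 ≤ (3 * d ^ 2 + 10 * d - 5) / (10 * d ^ 2) := by
    apply div_nonneg <;> nlinarith
  rw [hρ, inv_pow, inv_le_comm₀ (by positivity) (by norm_num)]
  linarith

end

theorem stmt_16 (k : ℕ) (hk : 1 ≤ k) :
    alphak k 1 * (1 - muk k 1) + alphak k k * muk k k ≤ 4/(3*(k:ℝ)) ∧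
    (1/4) * (1 - alphak k 1 * (1 - muk k 1) - alphak k k * muk k k)
      ≥ 1/4 - 1/(3*(k:ℝ)) := by
  have hK : (0:ℝ) < k := by exact_mod_cast hk
  have hu := rhok_pow_le hk
  have hratio : (1 + rhok k ^ k) / (1 - rhok k ^ k) ≤ 8 / 3 := by
    rw [div_le_div_iff₀ (by linarith) (by norm_num)]
    linarith
  have hbound : alphak k 1 * (1 - muk k 1) + alphak k k * muk k k ≤ 4 / (3 * (k:ℝ)) :=
    calc alphak k 1 * (1 - muk k 1) + alphak k k * muk k k
        = 1 / (2 * k) * ((1 + rhok k ^ k) / (1 - rhok k ^ k)) := alphak_one_mul_add_alphak_mul_muk_eq hk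
      _ ≤ 1 / (2 * k) * (8 / 3) := by gcongr
      _ = 4 / (3 * k) := by field_simp; norm_num
  refine ⟨hbound, ?_⟩
  have : 4 / (3 * (k:ℝ)) = 4 * (1 / (3 * k)) := by ring
  linarith

end
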